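/- Let n and k be integers with 1 < n < k < 2n, let D ⊆ {1,…,n} be a set of positive integers with n ∈ D, and let S = {1,…,k}. Let G be a finite bipartite simple graph with parts V_L and V_R, let G' be a finite simple graph with V_L ∪ V_R ⊆ V(G'), and let Blue_0, Red_0 be disjoint subsets of V(G') \ (V_L ∪ V_R) such that: (a) every vertex of V(G') \ (V_L ∪ V_R ∪ Blue_0 ∪ Red_0) is at graph distance at most k in G' from some vertex of Blue_0 and at distance at most k from some vertex of Red_0; (b) every x ∈ V_L is at distance at most k from some vertex of Red_0, at distance at least k+1 from every vertex of Blue_0, and at distance at least n+1 from every vertex of Red_0; (b') every y ∈ V_R is at distance at most k from some vertex of Blue_0, at distance at least k+1 from every vertex of Red_0, and at distance at least n+1 from every vertex of Blue_0; (c) for distinct u, v ∈ V_L ∪ V_R, dist_{G'}(u,v) = n if uv is an edge of G, and dist_{G'}(u,v) ≥ k+1 otherwise (in particular whenever u and v lie in the same part); (d) any two distinct vertices of Blue_0 ∪ Red_0 are at distance at least k+1. Then the distance game D⟨D,S⟩ on G' starting from the position with blue pieces on Blue_0 and red pieces on Red_0 is play-for-play equivalent to BiGraph-Node-Kayles on G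 starting from the empty position; in particular, for each player, that player has a winning strategy moving first (respectively, second) in one game if and only if in the other. -/

import Mathlib

universe u

/-- Combinatorial game theory (`SetTheory.PGame`) was removed from Mathlib; its core
definitions are restated here with their December 2024 meaning. -/
inductive SetTheory.PGame : Type (u + 1)
  | mk : ∀ α β : Type u, (α → SetTheory.PGame) → (β → SetTheory.PGame) → SetTheory.PGame

namespace SetTheory.PGame

def LeftMoves : PGame → Type u
  | mk l _ _ _ => l

def RightMoves : PGame → Type u
  | mk _ r _ _ => r

def moveLeft : (g : PGame) → LeftMoves g → PGame
  | mk _l _ L _ => L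

def moveRight : (g : PGame) → RightMoves g → PGame
  | mk _ _r _ R => R

/-- `leAux x y = (x ≤ y, y ≤ x)`, by recursion on `x` and then on `y`, following the old
defining equation `x ≤ y ↔ (∀ i, ¬ y ≤ x.moveLeft i) ∧ ∀ j, ¬ y.moveRight j ≤ x`. -/
noncomputable def leAux (x : PGame.{u}) : PGame.{u} → Prop × Prop :=
  PGame.rec (motive := fun _ => PGame.{u} → Prop × Prop)
    (fun _xl _xr xL xR ihL ihR y =>
      PGame.rec (motive := fun _ => Prop × Prop)
        (fun yl yr yL yR jhL jhR =>
          ((∀ i, ¬ (ihL i (mk yl yr yL yR)).2) ∧ ∀ j, ¬ (jhR j).2,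
            (∀ i, ¬ (jhL i).1) ∧ ∀ j, ¬ (ihR j (mk yl yr yL yR)).1)) y) x

instance : LE PGame.{u} :=
  ⟨fun x y => (leAux x y).1⟩

def LF (x y : PGame.{u}) : Prop :=
  ¬y ≤ x

infixl:50 " ⧏ " => PGame.LF

instance : Zero PGame.{u} :=
  ⟨⟨PEmpty, PEmpty, PEmpty.elim, PEmpty.elim⟩⟩

inductive Relabelling : PGame.{u} → PGame.{u} → Type (u + 1)
  | mk : ∀ {x y : PGame} (L : x.LeftMoves ≃ y.LeftMoves) (R : x.RightMoves ≃ y.RightMoves),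
    (∀ i, Relabelling (x.moveLeft i) (y.moveLeft (L i))) →
      (∀ j, Relabelling (x.moveRight j) (y.moveRight (R j))) → Relabelling x y

infixl:50 " ≡r " => PGame.Relabelling

end SetTheory.PGame

open SimpleGraph SetTheory

/-- In the distance game `D⟨D,S⟩` on the graph `G`, from the position with blue pieces on
`blue` and red pieces on `red`, Left may legally place a blue piece on the vertex `v`. -/
def LeftMove {W : Type*} (G : SimpleGraph W) (D S : Set ℕ) (blue red : Finset W) (v : W) : Prop :=
  v ∉ blue ∧ v ∉ red ∧ (∀ r ∈ red, ∀ d ∈ D, G.edist v r ≠ (d : ℕ∞)) ∧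
    ∀ b ∈ blue, ∀ s ∈ S, G.edist v b ≠ (s : ℕ∞)

/-- Right may legally place a red piece on the vertex `v`. -/
def RightMove {W : Type*} (G : SimpleGraph W) (D S : Set ℕ) (blue red : Finset W) (v : W) : Prop :=
  v ∉ blue ∧ v ∉ red ∧ (∀ b ∈ blue, ∀ d ∈ D, G.edist v b ≠ (d : ℕ∞)) ∧
    ∀ r ∈ red, ∀ s ∈ S, G.edist v r ≠ (s : ℕ∞)

/-- The distance game `D⟨D,S⟩` on `G` from the position `(blue, red)`, as a combinatorial
game (normal play: a player with no legal move loses). -/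
def distGame {W : Type*} [Fintype W] [DecidableEq W] (G : SimpleGraph W) (D S : Set ℕ)
    (blue red : Finset W) : PGame :=
  PGame.mk {v // LeftMove G D S blue red v} {v // RightMove G D S blue red v}
    (fun x => distGame G D S (insert x.1 blue) red)
    (fun x => distGame G D S blue (insert x.1 red))
termination_by ((blue ∪ red)ᶜ).card
decreasing_by
  · obtain ⟨h1, h2, -, -⟩ := x.2
    calc ((insert x.1 blue ∪ red)ᶜ).card
        = (((blue ∪ red)ᶜ).erase x.1).card := by
          rw [Finset.insert_union, Finset.compl_insert]
      _ < ((blue ∪ red)ᶜ).card :=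
          Finset.card_erase_lt_of_mem (Finset.mem_compl.2 (by simp [h1, h2]))
  · obtain ⟨h1, h2, -, -⟩ := x.2
    calc ((blue ∪ insert x.1 red)ᶜ).card
        = (((blue ∪ red)ᶜ).erase x.1).card := by
          rw [Finset.union_insert, Finset.compl_insert]
      _ < ((blue ∪ red)ᶜ).card :=
          Finset.card_erase_lt_of_mem (Finset.mem_compl.2 (by simp [h1, h2]))

/-- `BiGraph-Node-Kayles` on a bipartite graph `G` with parts `VL`, `VR`, from the position
where `occ` is the set of occupied vertices: players alternately occupy vertices that are
neither equal nor adjacent to a previously occupied vertex, Left occupying only vertices of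
`VL` and Right only vertices of `VR`; a player with no legal move loses. -/
def bnkGame {V : Type*} [Fintype V] [DecidableEq V] (G : SimpleGraph V) (VL VR : Finset V)
    (occ : Finset V) : PGame :=
  PGame.mk {v // v ∈ VL ∧ v ∉ occ ∧ ∀ u ∈ occ, ¬G.Adj v u}
    {v // v ∈ VR ∧ v ∉ occ ∧ ∀ u ∈ occ, ¬G.Adj v u}
    (fun x => bnkGame G VL VR (insert x.1 occ))
    (fun x => bnkGame G VL VR (insert x.1 occ))
termination_by occᶜ.card
decreasing_by
  all_goals
  · obtain ⟨-, h1, -⟩ := x.2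
    calc ((insert x.1 occ)ᶜ).card = (occᶜ.erase x.1).card := by rw [Finset.compl_insert]
      _ < occᶜ.card := Finset.card_erase_lt_of_mem (Finset.mem_compl.2 h1)



/-! A Kayles position `occ` corresponds to the distance-game position with blue pieces on
`Blue0 ∪ ι (occ ∩ VL)` and red pieces on `Red0 ∪ ι (occ ∩ VR)`. There Left may play exactly on
the vertices `ι x` with `x ∈ VL` unoccupied and not adjacent to `occ`: every other vertex is
within distance `k` of a blue piece by (a) and (b'), and a neighbour of an occupied `y ∈ VR`
is at distance `n ∈ D` from the red piece on `ι y`; conversely, by (b) and (c) all pieces are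
farther from such an `ι x` than any forbidden distance `d ≤ n < k + 1`. Exchanging colours gives
the same for Right, and playing `x` in one game corresponds to playing `ι x` in the other. -/

namespace SetTheory.PGame

theorem leAux_zero_snd_iff (x : PGame.{u}) :
    ((leAux 0 x).2 ↔ x ≤ 0) ∧ ((leAux x 0).2 ↔ 0 ≤ x) := by
  induction x with
  | mk xl xr xL xR ihL ihR =>
    constructor
    · show ((∀ i, ¬ (leAux 0 (xL i)).1) ∧ ∀ j : PEmpty, _) ↔
        (∀ i, ¬ (leAux (xL i) 0).2) ∧ ∀ j : PEmpty, _
      simp only [(ihL _).2, IsEmpty.forall_iff, and_true]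
      rfl
    · show ((∀ i : PEmpty, _) ∧ ∀ j, ¬ (leAux (xR j) 0).1) ↔
        (∀ i : PEmpty, _) ∧ ∀ j, ¬ (leAux 0 (xR j)).2
      simp only [(ihR _).1, IsEmpty.forall_iff, true_and]
      rfl

theorem zero_le_lf (x : PGame.{u}) : 0 ≤ x ↔ ∀ j, 0 ⧏ x.moveRight j := by
  cases x with
  | mk xl xr xL xR =>
    show ((∀ i : PEmpty, _) ∧ ∀ j, ¬ (leAux 0 (xR j)).2) ↔ _
    simp only [IsEmpty.forall_iff, true_and, (leAux_zero_snd_iff _).1]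
    rfl

theorem le_zero_lf (x : PGame.{u}) : x ≤ 0 ↔ ∀ i, x.moveLeft i ⧏ 0 := by
  cases x with
  | mk xl xr xL xR =>
    show ((∀ i, ¬ (leAux (xL i) 0).2) ∧ ∀ j : PEmpty, _) ↔ _
    simp only [IsEmpty.forall_iff, and_true, (leAux_zero_snd_iff _).2]
    rfl

def Relabelling.mk' {x y : PGame.{u}} (L : y.LeftMoves ≃ x.LeftMoves)
    (R : y.RightMoves ≃ x.RightMoves)
    (hL : ∀ i, x.moveLeft (L i) ≡r y.moveLeft i)
    (hR : ∀ j, x.moveRight (R j) ≡r y.moveRight j) :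
    x ≡r y :=
  Relabelling.mk L.symm R.symm
    (fun i => by simpa using hL (L.symm i))
    (fun j => by simpa using hR (R.symm j))

theorem Relabelling.zero_le_iff_and_le_zero_iff {x y : PGame.{u}} (r : x ≡r y) :
    (0 ≤ x ↔ 0 ≤ y) ∧ (x ≤ 0 ↔ y ≤ 0) := by
  induction r with
  | mk L R _ _ ihL ihR =>
    rw [zero_le_lf, zero_le_lf, le_zero_lf, le_zero_lf]
    exact ⟨R.forall_congr fun j => not_congr (ihR j).2,
      L.forall_congr fun i => not_congr (ihL i).1⟩

end SetTheory.PGame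

theorem ENat.coe_ne_of_le_of_add_one_le {m j : ℕ} {e : ℕ∞} (hm : m ≤ j)
    (he : (j : ℕ∞) + 1 ≤ e) : e ≠ m :=
  ((Nat.cast_le.2 hm).trans_lt ((ENat.add_one_le_iff (ENat.natCast_ne_top j)).1 he)).ne'

theorem SimpleGraph.exists_mem_Icc_edist_eq {W : Type*} {G : SimpleGraph W} {u v : W} {k : ℕ}
    (huv : u ≠ v) (h : G.edist u v ≤ k) : ∃ s ∈ Set.Icc 1 k, G.edist u v = s := by
  lift G.edist u v to ℕ using ne_top_of_le_ne_top (ENat.natCast_ne_top k) h with s hs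
  have hs0 : s ≠ 0 := by
    rintro rfl
    exact huv (SimpleGraph.edist_eq_zero_iff.1 hs.symm)
  exact ⟨s, ⟨Nat.one_le_iff_ne_zero.2 hs0, by exact_mod_cast h⟩, rfl⟩

theorem LeftMove.lt_edist {W : Type*} {G : SimpleGraph W} {D : Set ℕ} {k : ℕ}
    {blue red : Finset W} {w b : W} (hw : LeftMove G D (Set.Icc 1 k) blue red w) (hb : b ∈ blue) :
    (k : ℕ∞) < G.edist w b := by
  by_contra! h
  obtain ⟨s, hs, he⟩ :=
    SimpleGraph.exists_mem_Icc_edist_eq (ne_of_mem_of_not_mem hb hw.1).symm h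
  exact hw.2.2.2 b hb s hs he

theorem rightMove_iff_leftMove_swap {W : Type*} {G : SimpleGraph W} {D S : Set ℕ}
    {blue red : Finset W} {v : W} : RightMove G D S blue red v ↔ LeftMove G D S red blue v :=
  and_left_comm

noncomputable def Function.Embedding.subtypeEquivOfIff {α β : Type*} (ι : α ↪ β)
    {p : α → Prop} {q : β → Prop} (h : ∀ b, q b ↔ ∃ a, ι a = b ∧ p a) :
    {a // p a} ≃ {b // q b} :=
  Equiv.ofBijective (fun a => ⟨ι a, (h _).2 ⟨a, rfl, a.2⟩⟩)
    ⟨fun _ _ hab => Subtype.ext (ι.injective (congrArg Subtype.val hab)), fun b =>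
      let ⟨a, ha, hp⟩ := (h b.1).1 b.2
      ⟨⟨a, hp⟩, Subtype.ext ha⟩⟩

section liftPieces

variable {V W : Type*} [DecidableEq V] [DecidableEq W]

def liftPieces (P₀ : Finset W) (ι : V ↪ W) (part occ : Finset V) : Finset W :=
  P₀ ∪ (occ ∩ part).map ι

variable {P₀ : Finset W} {ι : V ↪ W} {part occ : Finset V} {x : V}

@[simp]
theorem liftPieces_empty : liftPieces P₀ ι part ∅ = P₀ := by
  simp [liftPieces]

theorem mem_liftPieces {w : W} :
    w ∈ liftPieces P₀ ι part occ ↔ w ∈ P₀ ∨ ∃ u ∈ occ ∩ part, ι u = w := by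
  simp [liftPieces]

theorem apply_mem_liftPieces :
    ι x ∈ liftPieces P₀ ι part occ ↔ ι x ∈ P₀ ∨ x ∈ occ ∧ x ∈ part := by
  simp [liftPieces]

theorem liftPieces_insert_of_mem (hx : x ∈ part) :
    liftPieces P₀ ι part (insert x occ) = insert (ι x) (liftPieces P₀ ι part occ) := by
  rw [liftPieces, liftPieces, Finset.insert_inter_of_mem hx, Finset.map_insert, Finset.union_insert]

theorem liftPieces_insert_of_notMem (hx : x ∉ part) :
    liftPieces P₀ ι part (insert x occ) = liftPieces P₀ ι part occ := by
  rw [liftPieces, liftPieces, Finset.insert_inter_of_notMem hx]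

end liftPieces

open SetTheory.PGame in
theorem nonempty_distGame_relabelling_bnkGame {V W : Type u} [Fintype V] [DecidableEq V]
    [Fintype W] [DecidableEq W] {G : SimpleGraph V} {G' : SimpleGraph W} {D S : Set ℕ}
    {VL VR : Finset V} {ι : V ↪ W} {Blue0 Red0 : Finset W} (hparts : Disjoint VL VR)
    (hleft : ∀ occ w,
      LeftMove G' D S (liftPieces Blue0 ι VL occ) (liftPieces Red0 ι VR occ) w ↔
      ∃ x, ι x = w ∧ x ∈ VL ∧ x ∉ occ ∧ ∀ u ∈ occ, ¬G.Adj x u)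
    (hright : ∀ occ w,
      RightMove G' D S (liftPieces Blue0 ι VL occ) (liftPieces Red0 ι VR occ) w ↔
      ∃ x, ι x = w ∧ x ∈ VR ∧ x ∉ occ ∧ ∀ u ∈ occ, ¬G.Adj x u)
    (occ : Finset V) :
    Nonempty (distGame G' D S (liftPieces Blue0 ι VL occ) (liftPieces Red0 ι VR occ) ≡r
      bnkGame G VL VR occ) := by
  rw [distGame, bnkGame]
  refine ⟨Relabelling.mk' (ι.subtypeEquivOfIff (hleft occ)) (ι.subtypeEquivOfIff (hright occ))
    (fun i => ?_) (fun j => ?_)⟩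
  · have r := (nonempty_distGame_relabelling_bnkGame hparts hleft hright (insert i.1 occ)).some
    rwa [liftPieces_insert_of_mem i.2.1,
      liftPieces_insert_of_notMem (Finset.disjoint_left.1 hparts i.2.1)] at r
  · have r := (nonempty_distGame_relabelling_bnkGame hparts hleft hright (insert j.1 occ)).some
    rwa [liftPieces_insert_of_mem j.2.1,
      liftPieces_insert_of_notMem (Finset.disjoint_right.1 hparts j.2.1)] at r
termination_by occᶜ.card
decreasing_by
  · rw [Finset.compl_insert]
    exact Finset.card_erase_lt_of_mem (Finset.mem_compl.2 i.2.2.1)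
  · rw [Finset.compl_insert]
    exact Finset.card_erase_lt_of_mem (Finset.mem_compl.2 j.2.2.1)

section moves

variable {V W : Type*} [DecidableEq V] [DecidableEq W] {G : SimpleGraph V} {G' : SimpleGraph W}
  {ι : V ↪ W} {VL VR : Finset V} {Blue0 Red0 : Finset W} {D : Set ℕ} {n k : ℕ}

theorem exists_of_leftMove_liftPieces (hnD : n ∈ D)
    (hcover : ∀ v : V, v ∈ VL ∨ v ∈ VR) (hparts : Disjoint VL VR)
    (hbip : ∀ ⦃x y : V⦄, G.Adj x y → (x ∈ VL ∧ y ∈ VR) ∨ (x ∈ VR ∧ y ∈ VL))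
    (hfree_near : ∀ w : W, (∀ v : V, ι v ≠ w) → w ∉ Blue0 → w ∉ Red0 →
      ∃ b ∈ Blue0, G'.edist w b ≤ (k : ℕ∞))
    (hVR_near : ∀ y ∈ VR, ∃ b ∈ Blue0, G'.edist (ι y) b ≤ (k : ℕ∞))
    (hc : ∀ u v : V, u ≠ v →
      (G.Adj u v → G'.edist (ι u) (ι v) = (n : ℕ∞)) ∧
      (¬G.Adj u v → (k : ℕ∞) + 1 ≤ G'.edist (ι u) (ι v)))
    {occ : Finset V} {w : W} (h : LeftMove G' D (Set.Icc 1 k) (liftPieces Blue0 ι VL occ)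
      (liftPieces Red0 ι VR occ) w) :
    ∃ x, ι x = w ∧ x ∈ VL ∧ x ∉ occ ∧ ∀ u ∈ occ, ¬G.Adj x u := by
  have hnear_blue (hb : ∃ b ∈ Blue0, G'.edist w b ≤ (k : ℕ∞)) : False := by
    obtain ⟨b, hb, hbk⟩ := hb
    exact (h.lt_edist (Finset.mem_union_left _ hb)).not_ge hbk
  obtain ⟨x, rfl⟩ : ∃ x, ι x = w := by
    by_contra! hw
    exact hnear_blue (hfree_near w hw (fun hb => h.1 (Finset.mem_union_left _ hb))
      (fun hr => h.2.1 (Finset.mem_union_left _ hr)))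
  have hxL : x ∈ VL := (hcover x).resolve_right fun hxR => hnear_blue (hVR_near x hxR)
  have hxocc : x ∉ occ := fun hx => (hcover x).elim
    (fun hxL => h.1 (apply_mem_liftPieces.2 (Or.inr ⟨hx, hxL⟩)))
    (fun hxR => h.2.1 (apply_mem_liftPieces.2 (Or.inr ⟨hx, hxR⟩)))
  refine ⟨x, rfl, hxL, hxocc, fun u hu hxu => ?_⟩
  have huR : u ∈ VR := by
    rcases hbip hxu with ⟨-, huR⟩ | ⟨hxR, -⟩
    · exact huR
    · exact absurd hxR (Finset.disjoint_left.1 hparts hxL)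
  exact h.2.2.1 (ι u) (apply_mem_liftPieces.2 (Or.inr ⟨hu, huR⟩)) n hnD ((hc x u hxu.ne).1 hxu)

theorem leftMove_liftPieces (hD : ∀ d ∈ D, d ≤ n) (hnk : n < k)
    (hB0 : ∀ v : V, ι v ∉ Blue0) (hR0 : ∀ v : V, ι v ∉ Red0)
    (hVL_far : ∀ x ∈ VL, (∀ b ∈ Blue0, (k : ℕ∞) + 1 ≤ G'.edist (ι x) b) ∧
      (∀ r ∈ Red0, (n : ℕ∞) + 1 ≤ G'.edist (ι x) r))
    (hc : ∀ u v : V, u ≠ v →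
      (G.Adj u v → G'.edist (ι u) (ι v) = (n : ℕ∞)) ∧
      (¬G.Adj u v → (k : ℕ∞) + 1 ≤ G'.edist (ι u) (ι v)))
    {occ : Finset V} {x : V} (hxL : x ∈ VL) (hxocc : x ∉ occ)
    (hxadj : ∀ u ∈ occ, ¬G.Adj x u) :
    LeftMove G' D (Set.Icc 1 k) (liftPieces Blue0 ι VL occ) (liftPieces Red0 ι VR occ)
      (ι x) := by
  have hocc_far {part : Finset V} {w : W} (hw : ∃ u ∈ occ ∩ part, ι u = w) :
      (k : ℕ∞) + 1 ≤ G'.edist (ι x) w := by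
    obtain ⟨u, hu, rfl⟩ := hw
    have hu := (Finset.mem_inter.1 hu).1
    exact (hc x u (ne_of_mem_of_not_mem hu hxocc).symm).2 (hxadj u hu)
  refine ⟨fun hx => ?_, fun hx => ?_, fun r hr d hd => ?_, fun b hb s hs => ?_⟩
  · exact (apply_mem_liftPieces.1 hx).elim (hB0 x) fun h => hxocc h.1
  · exact (apply_mem_liftPieces.1 hx).elim (hR0 x) fun h => hxocc h.1
  · rcases mem_liftPieces.1 hr with hr | hr
    · exact ENat.coe_ne_of_le_of_add_one_le (hD d hd) ((hVL_far x hxL).2 r hr)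
    · exact ENat.coe_ne_of_le_of_add_one_le ((hD d hd).trans hnk.le) (hocc_far hr)
  · rcases mem_liftPieces.1 hb with hb | hb
    · exact ENat.coe_ne_of_le_of_add_one_le hs.2 ((hVL_far x hxL).1 b hb)
    · exact ENat.coe_ne_of_le_of_add_one_le hs.2 (hocc_far hb)

theorem leftMove_liftPieces_iff (hD : ∀ d ∈ D, d ≤ n) (hnD : n ∈ D) (hnk : n < k)
    (hcover : ∀ v : V, v ∈ VL ∨ v ∈ VR) (hparts : Disjoint VL VR)
    (hbip : ∀ ⦃x y : V⦄, G.Adj x y → (x ∈ VL ∧ y ∈ VR) ∨ (x ∈ VR ∧ y ∈ VL))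
    (hB0 : ∀ v : V, ι v ∉ Blue0) (hR0 : ∀ v : V, ι v ∉ Red0)
    (hfree_near : ∀ w : W, (∀ v : V, ι v ≠ w) → w ∉ Blue0 → w ∉ Red0 →
      ∃ b ∈ Blue0, G'.edist w b ≤ (k : ℕ∞))
    (hVR_near : ∀ y ∈ VR, ∃ b ∈ Blue0, G'.edist (ι y) b ≤ (k : ℕ∞))
    (hVL_far : ∀ x ∈ VL, (∀ b ∈ Blue0, (k : ℕ∞) + 1 ≤ G'.edist (ι x) b) ∧
      (∀ r ∈ Red0, (n : ℕ∞) + 1 ≤ G'.edist (ι x) r))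
    (hc : ∀ u v : V, u ≠ v →
      (G.Adj u v → G'.edist (ι u) (ι v) = (n : ℕ∞)) ∧
      (¬G.Adj u v → (k : ℕ∞) + 1 ≤ G'.edist (ι u) (ι v)))
    (occ : Finset V) (w : W) :
    LeftMove G' D (Set.Icc 1 k) (liftPieces Blue0 ι VL occ) (liftPieces Red0 ι VR occ) w ↔
      ∃ x, ι x = w ∧ x ∈ VL ∧ x ∉ occ ∧ ∀ u ∈ occ, ¬G.Adj x u := by
  refine ⟨exists_of_leftMove_liftPieces hnD hcover hparts hbip hfree_near hVR_near hc, ?_⟩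
  rintro ⟨x, rfl, hxL, hxocc, hxadj⟩
  exact leftMove_liftPieces hD hnk hB0 hR0 hVL_far hc hxL hxocc hxadj

end moves

open SetTheory.PGame in
theorem stmt15_general {V W : Type u} [Fintype V] [DecidableEq V] [Fintype W] [DecidableEq W]
    (n k : ℕ) (hnk : n < k)
    (D : Set ℕ) (hD : D ⊆ Set.Icc 1 n) (hnD : n ∈ D)
    (G : SimpleGraph V) (VL VR : Finset V)
    (hcover : ∀ v : V, v ∈ VL ∨ v ∈ VR) (hparts : Disjoint VL VR)
    (hbip : ∀ ⦃x y : V⦄, G.Adj x y → (x ∈ VL ∧ y ∈ VR) ∨ (x ∈ VR ∧ y ∈ VL))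
    (G' : SimpleGraph W) (ι : V ↪ W)
    (Blue0 Red0 : Finset W)
    (hB0 : ∀ v : V, ι v ∉ Blue0) (hR0 : ∀ v : V, ι v ∉ Red0)
    -- (a) every extra vertex is within distance `k` of `Blue0` and of `Red0`:
    (ha : ∀ w : W, (∀ v : V, ι v ≠ w) → w ∉ Blue0 → w ∉ Red0 →
      (∃ b ∈ Blue0, G'.edist w b ≤ (k : ℕ∞)) ∧ (∃ r ∈ Red0, G'.edist w r ≤ (k : ℕ∞)))
    -- (b) every `x ∈ VL` is within distance `k` of some vertex of `Red0`, at distance at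
    -- least `k+1` from every vertex of `Blue0`, and at distance at least `n+1` from every
    -- vertex of `Red0`:
    (hbL : ∀ x ∈ VL, (∃ r ∈ Red0, G'.edist (ι x) r ≤ (k : ℕ∞)) ∧
      (∀ b ∈ Blue0, (k : ℕ∞) + 1 ≤ G'.edist (ι x) b) ∧
      (∀ r ∈ Red0, (n : ℕ∞) + 1 ≤ G'.edist (ι x) r))
    -- (b') every `y ∈ VR` is within distance `k` of some vertex of `Blue0`, at distance at
    -- least `k+1` from every vertex of `Red0`, and at distance at least `n+1` from every
    -- vertex of `Blue0`:
    (hbR : ∀ y ∈ VR, (∃ b ∈ Blue0, G'.edist (ι y) b ≤ (k : ℕ∞)) ∧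
      (∀ r ∈ Red0, (k : ℕ∞) + 1 ≤ G'.edist (ι y) r) ∧
      (∀ b ∈ Blue0, (n : ℕ∞) + 1 ≤ G'.edist (ι y) b))
    -- (c) distances between vertices of `V(G) = VL ∪ VR`:
    (hc : ∀ u v : V, u ≠ v →
      (G.Adj u v → G'.edist (ι u) (ι v) = (n : ℕ∞)) ∧
      (¬G.Adj u v → (k : ℕ∞) + 1 ≤ G'.edist (ι u) (ι v))) :
    -- the two games are play-for-play equivalent:
    Nonempty (distGame G' D (Set.Icc 1 k) Blue0 Red0 ≡r bnkGame G VL VR ∅) ∧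
    -- in particular, for each player, that player has a winning strategy moving first
    -- (respectively, second) in one game iff in the other:
    ((0 ⧏ distGame G' D (Set.Icc 1 k) Blue0 Red0 ↔ 0 ⧏ bnkGame G VL VR ∅) ∧
      (0 ≤ distGame G' D (Set.Icc 1 k) Blue0 Red0 ↔ 0 ≤ bnkGame G VL VR ∅) ∧
      (distGame G' D (Set.Icc 1 k) Blue0 Red0 ⧏ 0 ↔ bnkGame G VL VR ∅ ⧏ 0) ∧
      (distGame G' D (Set.Icc 1 k) Blue0 Red0 ≤ 0 ↔ bnkGame G VL VR ∅ ≤ 0)) := by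
  have hleft := leftMove_liftPieces_iff (fun d hd => (hD hd).2) hnD hnk hcover hparts hbip
    hB0 hR0 (fun w hw hb hr => (ha w hw hb hr).1) (fun y hy => (hbR y hy).1)
    (fun x hx => (hbL x hx).2) hc
  have hright := leftMove_liftPieces_iff (fun d hd => (hD hd).2) hnD hnk
    (fun v => (hcover v).symm) hparts.symm (fun _ _ hxy => (hbip hxy).symm)
    hR0 hB0 (fun w hw hb hr => (ha w hw hr hb).2) (fun x hx => (hbL x hx).1)
    (fun y hy => (hbR y hy).2) hc
  obtain ⟨r⟩ := nonempty_distGame_relabelling_bnkGame hparts hleft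
    (fun occ w => rightMove_iff_leftMove_swap.trans (hright occ w)) ∅
  rw [liftPieces_empty, liftPieces_empty] at r
  obtain ⟨hzero_le, hle_zero⟩ := r.zero_le_iff_and_le_zero_iff
  exact ⟨⟨r⟩, not_congr hle_zero, hzero_le, not_congr hzero_le, hle_zero⟩

open SetTheory.PGame in
/-- for `1 < n < k < 2n`, `D ⊆ {1,…,n}` with `n ∈ D`, and `S = {1,…,k}`, under
hypotheses (a), (b), (b'), (c), (d), the distance game `D⟨D,S⟩` on `G'` starting from the
position with blue pieces on `Blue0` and red pieces on `Red0` is play-for-play equivalent to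
`BiGraph-Node-Kayles` on the bipartite graph `G` (with parts `VL`, `VR`) starting from the
empty position. -/
theorem stmt15 {V W : Type u} [Fintype V] [DecidableEq V] [Fintype W] [DecidableEq W]
    (n k : ℕ) (hn : 1 < n) (hnk : n < k) (hk2n : k < 2 * n)
    (D : Set ℕ) (hD : D ⊆ Set.Icc 1 n) (hnD : n ∈ D)
    (G : SimpleGraph V) (VL VR : Finset V)
    (hcover : ∀ v : V, v ∈ VL ∨ v ∈ VR) (hparts : Disjoint VL VR)
    (hbip : ∀ ⦃x y : V⦄, G.Adj x y → (x ∈ VL ∧ y ∈ VR) ∨ (x ∈ VR ∧ y ∈ VL))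
    (G' : SimpleGraph W) (ι : V ↪ W)
    (Blue0 Red0 : Finset W) (hBR : Disjoint Blue0 Red0)
    (hB0 : ∀ v : V, ι v ∉ Blue0) (hR0 : ∀ v : V, ι v ∉ Red0)
    -- (a) every extra vertex is within distance `k` of `Blue0` and of `Red0`:
    (ha : ∀ w : W, (∀ v : V, ι v ≠ w) → w ∉ Blue0 → w ∉ Red0 →
      (∃ b ∈ Blue0, G'.edist w b ≤ (k : ℕ∞)) ∧ (∃ r ∈ Red0, G'.edist w r ≤ (k : ℕ∞)))
    -- (b) every `x ∈ VL` is within distance `k` of some vertex of `Red0`, at distance at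
    -- least `k+1` from every vertex of `Blue0`, and at distance at least `n+1` from every
    -- vertex of `Red0`:
    (hbL : ∀ x ∈ VL, (∃ r ∈ Red0, G'.edist (ι x) r ≤ (k : ℕ∞)) ∧
      (∀ b ∈ Blue0, (k : ℕ∞) + 1 ≤ G'.edist (ι x) b) ∧
      (∀ r ∈ Red0, (n : ℕ∞) + 1 ≤ G'.edist (ι x) r))
    -- (b') every `y ∈ VR` is within distance `k` of some vertex of `Blue0`, at distance at
    -- least `k+1` from every vertex of `Red0`, and at distance at least `n+1` from every
    -- vertex of `Blue0`:
    (hbR : ∀ y ∈ VR, (∃ b ∈ Blue0, G'.edist (ι y) b ≤ (k : ℕ∞)) ∧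
      (∀ r ∈ Red0, (k : ℕ∞) + 1 ≤ G'.edist (ι y) r) ∧
      (∀ b ∈ Blue0, (n : ℕ∞) + 1 ≤ G'.edist (ι y) b))
    -- (c) distances between vertices of `V(G) = VL ∪ VR`:
    (hc : ∀ u v : V, u ≠ v →
      (G.Adj u v → G'.edist (ι u) (ι v) = (n : ℕ∞)) ∧
      (¬G.Adj u v → (k : ℕ∞) + 1 ≤ G'.edist (ι u) (ι v)))
    -- (d) distinct vertices of `Blue0 ∪ Red0` are at distance at least `k+1`:
    (hd : ∀ w₁ ∈ Blue0 ∪ Red0, ∀ w₂ ∈ Blue0 ∪ Red0, w₁ ≠ w₂ →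
      (k : ℕ∞) + 1 ≤ G'.edist w₁ w₂) :
    -- the two games are play-for-play equivalent:
    Nonempty (distGame G' D (Set.Icc 1 k) Blue0 Red0 ≡r bnkGame G VL VR ∅) ∧
    -- in particular, for each player, that player has a winning strategy moving first
    -- (respectively, second) in one game iff in the other:
    ((0 ⧏ distGame G' D (Set.Icc 1 k) Blue0 Red0 ↔ 0 ⧏ bnkGame G VL VR ∅) ∧
      (0 ≤ distGame G' D (Set.Icc 1 k) Blue0 Red0 ↔ 0 ≤ bnkGame G VL VR ∅) ∧
      (distGame G' D (Set.Icc 1 k) Blue0 Red0 ⧏ 0 ↔ bnkGame G VL VR ∅ ⧏ 0) ∧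
      (distGame G' D (Set.Icc 1 k) Blue0 Red0 ≤ 0 ↔ bnkGame G VL VR ∅ ≤ 0)) :=
  stmt15_general n k hnk D hD hnD G VL VR hcover hparts hbip G' ι Blue0 Red0 hB0 hR0 ha hbL hbR hc
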